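/- arXiv:1612.07623 — 2 statements merged into one kernel-verified Lean document; each statement's English description precedes it below -/
import Mathlib

section
/- Let (X,d) be a geodesic metric space and φ : X → ℝ a Kantorovich potential. Suppose x, y, z ∈ X and t ∈ (0,1) satisfy d(x,y)²/(2t) − φ(y) = φ^c(z) − d(x,z)²/(2(1−t)). Then x is a t-intermediate point between y and z, namely d(y,z) = d(x,y)/t = d(x,z)/(1−t), and there exists a φ-Kantorovich geodesic γ with γ_0 = y, γ_t = x and γ_1 = z. -/
/-- `ψ` is pointwise the `c`-transform of `φ` for the cost `c = d²/2`:
at every point `x`, `ψ x` is a genuine (finite) infimum of `d(x,y)²/2 - φ(y)` over `y`. -/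
def IsCTransform {X : Type*} [MetricSpace X] (φ ψ : X → ℝ) : Prop :=
  ∀ x : X, IsGLB {v : ℝ | ∃ y : X, v = dist x y ^ 2 / 2 - φ y} (ψ x)

/-- `φ` is a Kantorovich potential with (real-valued) conjugate potential `φc`. -/
def IsKantorovichPair {X : Type*} [MetricSpace X] (φ φc : X → ℝ) : Prop :=
  IsCTransform φ φc ∧ IsCTransform φc φ

/-- A constant-speed geodesic parametrized on `[0,1]`. -/
def IsGeodesic {X : Type*} [MetricSpace X] (γ : ℝ → X) : Prop :=
  ∀ s ∈ Set.Icc (0:ℝ) 1, ∀ t ∈ Set.Icc (0:ℝ) 1,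
    dist (γ s) (γ t) = |s - t| * dist (γ 0) (γ 1)

/-- A `φ`-Kantorovich geodesic: a geodesic with `φ(γ₀) + φ^c(γ₁) = ℓ(γ)²/2`,
where `ℓ(γ) = d(γ₀,γ₁)`. -/
def IsKantorovichGeodesic {X : Type*} [MetricSpace X] (φ φc : X → ℝ) (γ : ℝ → X) : Prop :=
  IsGeodesic γ ∧ φ (γ 0) + φc (γ 1) = dist (γ 0) (γ 1) ^ 2 / 2

/-- A metric space is geodesic if every pair of points is joined by a geodesic. -/
def IsGeodesicSpace (X : Type*) [MetricSpace X] : Prop :=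
  ∀ x y : X, ∃ γ : ℝ → X, IsGeodesic γ ∧ γ 0 = x ∧ γ 1 = y

/-- The interpolating intermediate-time Kantorovich potential
`φ_t(x) = -inf_y (d(x,y)²/(2t) - φ(y))` for `t ≠ 0`, and `φ_0 = φ`. -/
noncomputable def interpPotential {X : Type*} [MetricSpace X] (φ : X → ℝ) (t : ℝ) (x : X) : ℝ :=
  if t = 0 then φ x
  else -sInf {v : ℝ | ∃ y : X, v = dist x y ^ 2 / (2 * t) - φ y}

/-- The time-reversed interpolating Kantorovich potential
`φ̄_t(x) = inf_y (d(x,y)²/(2(1-t)) - φ^c(y))` for `t ≠ 1`, and `φ̄_1 = -φ^c`. -/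
noncomputable def reversePotential {X : Type*} [MetricSpace X] (φc : X → ℝ) (t : ℝ) (x : X) : ℝ :=
  if t = 1 then -φc x
  else sInf {v : ℝ | ∃ y : X, v = dist x y ^ 2 / (2 * (1 - t)) - φc y}

/-!
The potential inequality `φ(y) + φ^c(z) ≤ d(y,z)²/2` turns the hypothesis into
`d(x,y)²/t + d(x,z)²/(1-t) ≤ d(y,z)²`. Since
`a²/t + b²/(1-t) = (a+b)² + (a(1-t) - bt)²/(t(1-t))` and `d(y,z) ≤ d(x,y) + d(x,z)`, this forces
equality in the triangle inequality and `d(x,y) : d(x,z) = t : (1-t)`, so that the potential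
inequality is an equality as well. Concatenating geodesics from `y` to `x` and from `x` to `z`,
run at the speeds `1/t` and `1/(1-t)`, gives the required geodesic.
-/

open Set

lemma sq_div_add_sq_div_one_sub {K : Type*} [Field K] (a b : K) {t : K} (ht : t ≠ 0)
    (ht' : 1 - t ≠ 0) :
    a ^ 2 / t + b ^ 2 / (1 - t) = (a + b) ^ 2 + (a * (1 - t) - b * t) ^ 2 / (t * (1 - t)) := by
  field_simp
  ring

section Metric

variable {X : Type*} [MetricSpace X]

lemma dist_eq_mul_of_sq_div_add_sq_div_le {x y z : X} {t : ℝ} (ht0 : 0 < t) (ht1 : t < 1)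
    (h : dist x y ^ 2 / t + dist x z ^ 2 / (1 - t) ≤ dist y z ^ 2) :
    dist x y = t * dist y z ∧ dist x z = (1 - t) * dist y z := by
  set a := dist x y
  set b := dist x z
  set D := dist y z
  have h1t : 0 < 1 - t := by linarith
  have htri : D ≤ a + b := dist_triangle_left y z x
  have hsq : D ^ 2 ≤ (a + b) ^ 2 := pow_le_pow_left₀ dist_nonneg htri 2
  rw [sq_div_add_sq_div_one_sub a b ht0.ne' h1t.ne'] at h
  have hdefect : (a * (1 - t) - b * t) ^ 2 / (t * (1 - t)) = 0 :=
    le_antisymm ((add_le_iff_nonpos_right _).1 (h.trans hsq)) (by positivity)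
  have hratio : a * (1 - t) = b * t := by
    rw [div_eq_zero_iff, or_iff_left (by positivity), sq_eq_zero_iff] at hdefect
    linarith
  have hD : D = a + b :=
    le_antisymm htri ((pow_le_pow_iff_left₀ (by positivity) dist_nonneg two_ne_zero).1
      (by linarith))
  exact ⟨by linear_combination hratio - t * hD, by linear_combination -hratio - (1 - t) * hD⟩

lemma IsCTransform.le_sub {φ ψ : X → ℝ} (h : IsCTransform φ ψ) (x y : X) :
    ψ x ≤ dist x y ^ 2 / 2 - φ y :=
  (h x).1 ⟨y, rfl⟩

/-- The triangle inequality `d(γ₀,γ₁) ≤ d(γ₀,γₛ) + d(γₛ,γₛ') + d(γₛ',γ₁)` leaves no room for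
any of the three bounds to be strict. -/
lemma isGeodesic_of_dist_le {γ : ℝ → X}
    (h : ∀ s ∈ Icc (0 : ℝ) 1, ∀ s' ∈ Icc (0 : ℝ) 1, s ≤ s' →
      dist (γ s) (γ s') ≤ (s' - s) * dist (γ 0) (γ 1)) :
    IsGeodesic γ := by
  have key : ∀ s ∈ Icc (0 : ℝ) 1, ∀ s' ∈ Icc (0 : ℝ) 1, s ≤ s' →
      dist (γ s) (γ s') = (s' - s) * dist (γ 0) (γ 1) := by
    intro s hs s' hs' hss'
    have h0 := h 0 ⟨le_rfl, zero_le_one⟩ s hs hs.1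
    have h1 := h s' hs' 1 ⟨zero_le_one, le_rfl⟩ hs'.2
    have htri := dist_triangle4 (γ 0) (γ s) (γ s') (γ 1)
    linarith [h s hs s' hs' hss']
  intro s hs s' hs'
  rcases le_total s s' with hss' | hs's
  · rw [key s hs s' hs' hss', abs_of_nonpos (by linarith), neg_sub]
  · rw [dist_comm, key s' hs' s hs hs's, abs_of_nonneg (by linarith)]

lemma IsGeodesic.dist_apply_div {γ : ℝ → X} (hγ : IsGeodesic γ) {a L u v : ℝ} (hL : 0 < L)
    (hu : u ∈ Icc a (a + L)) (hv : v ∈ Icc a (a + L)) :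
    dist (γ ((u - a) / L)) (γ ((v - a) / L)) = |u - v| / L * dist (γ 0) (γ 1) := by
  have mem : ∀ w ∈ Icc a (a + L), (w - a) / L ∈ Icc (0 : ℝ) 1 := fun w hw =>
    ⟨div_nonneg (by linarith [hw.1]) hL.le, (div_le_one hL).2 (by linarith [hw.2])⟩
  rw [hγ _ (mem u hu) _ (mem v hv), div_sub_div_same, sub_sub_sub_cancel_right, abs_div,
    abs_of_pos hL]

end Metric

noncomputable def pathConcat {X : Type*} (γ₁ γ₂ : ℝ → X) (t s : ℝ) : X :=
  if s ≤ t then γ₁ (s / t) else γ₂ ((s - t) / (1 - t))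

section Concat

variable {X : Type*} {γ₁ γ₂ : ℝ → X} {t : ℝ}

lemma pathConcat_of_le {s : ℝ} (hs : s ≤ t) : pathConcat γ₁ γ₂ t s = γ₁ (s / t) :=
  if_pos hs

lemma pathConcat_of_ge (hmid : γ₁ 1 = γ₂ 0) (ht0 : t ≠ 0) {s : ℝ} (hs : t ≤ s) :
    pathConcat γ₁ γ₂ t s = γ₂ ((s - t) / (1 - t)) := by
  rcases hs.eq_or_lt with rfl | hts
  · rw [pathConcat_of_le le_rfl, div_self ht0, hmid, sub_self, zero_div]
  · exact if_neg hts.not_ge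

lemma pathConcat_zero (ht0 : 0 ≤ t) : pathConcat γ₁ γ₂ t 0 = γ₁ 0 := by
  rw [pathConcat_of_le ht0, zero_div]

lemma pathConcat_self (ht0 : t ≠ 0) : pathConcat γ₁ γ₂ t t = γ₁ 1 := by
  rw [pathConcat_of_le le_rfl, div_self ht0]

lemma pathConcat_one (hmid : γ₁ 1 = γ₂ 0) (ht0 : t ≠ 0) (ht1 : t < 1) :
    pathConcat γ₁ γ₂ t 1 = γ₂ 1 := by
  rw [pathConcat_of_ge hmid ht0 ht1.le, div_self (sub_pos.2 ht1).ne']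

variable [MetricSpace X]

lemma dist_pathConcat_of_le (hγ₁ : IsGeodesic γ₁) (ht0 : 0 < t) {D : ℝ}
    (hℓ₁ : dist (γ₁ 0) (γ₁ 1) = t * D) {u v : ℝ} (hu : u ∈ Icc 0 t) (hv : v ∈ Icc 0 t) :
    dist (pathConcat γ₁ γ₂ t u) (pathConcat γ₁ γ₂ t v) = |u - v| * D := by
  have h := hγ₁.dist_apply_div ht0 (by rwa [zero_add] : u ∈ Icc 0 (0 + t))
    (by rwa [zero_add] : v ∈ Icc 0 (0 + t))
  rw [sub_zero, sub_zero, hℓ₁] at h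
  rw [pathConcat_of_le hu.2, pathConcat_of_le hv.2, h]
  field_simp

lemma dist_pathConcat_of_ge (hγ₂ : IsGeodesic γ₂) (hmid : γ₁ 1 = γ₂ 0) (ht0 : t ≠ 0)
    (ht1 : t < 1) {D : ℝ} (hℓ₂ : dist (γ₂ 0) (γ₂ 1) = (1 - t) * D) {u v : ℝ}
    (hu : u ∈ Icc t 1) (hv : v ∈ Icc t 1) :
    dist (pathConcat γ₁ γ₂ t u) (pathConcat γ₁ γ₂ t v) = |u - v| * D := by
  have h1t : 0 < 1 - t := sub_pos.2 ht1
  have h := hγ₂.dist_apply_div h1t (by rwa [add_sub_cancel] : u ∈ Icc t (t + (1 - t)))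
    (by rwa [add_sub_cancel] : v ∈ Icc t (t + (1 - t)))
  rw [hℓ₂] at h
  rw [pathConcat_of_ge hmid ht0 hu.1, pathConcat_of_ge hmid ht0 hv.1, h]
  field_simp

lemma isGeodesic_pathConcat (hγ₁ : IsGeodesic γ₁) (hγ₂ : IsGeodesic γ₂)
    (hmid : γ₁ 1 = γ₂ 0) (ht0 : 0 < t) (ht1 : t < 1)
    (hℓ₁ : dist (γ₁ 0) (γ₁ 1) = t * dist (γ₁ 0) (γ₂ 1))
    (hℓ₂ : dist (γ₂ 0) (γ₂ 1) = (1 - t) * dist (γ₁ 0) (γ₂ 1)) :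
    IsGeodesic (pathConcat γ₁ γ₂ t) := by
  have seg₁ := fun {u v} => dist_pathConcat_of_le (γ₂ := γ₂) (u := u) (v := v) hγ₁ ht0 hℓ₁
  have seg₂ := fun {u v} =>
    dist_pathConcat_of_ge (u := u) (v := v) hγ₂ hmid ht0.ne' ht1 hℓ₂
  apply isGeodesic_of_dist_le
  intro s hs s' hs' hss'
  rw [pathConcat_zero ht0.le, pathConcat_one hmid ht0.ne' ht1]
  by_cases hs't : s' ≤ t
  · rw [seg₁ ⟨hs.1, hss'.trans hs't⟩ ⟨hs'.1, hs't⟩, abs_of_nonpos (by linarith), neg_sub]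
  by_cases hts : t ≤ s
  · rw [seg₂ ⟨hts, hs.2⟩ ⟨hts.trans hss', hs'.2⟩, abs_of_nonpos (by linarith), neg_sub]
  rw [not_le] at hs't hts
  calc dist (pathConcat γ₁ γ₂ t s) (pathConcat γ₁ γ₂ t s')
      ≤ dist (pathConcat γ₁ γ₂ t s) (pathConcat γ₁ γ₂ t t) +
        dist (pathConcat γ₁ γ₂ t t) (pathConcat γ₁ γ₂ t s') := dist_triangle _ _ _
    _ = (t - s) * dist (γ₁ 0) (γ₂ 1) + (s' - t) * dist (γ₁ 0) (γ₂ 1) := by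
      rw [seg₁ ⟨hs.1, hts.le⟩ ⟨ht0.le, le_rfl⟩, seg₂ ⟨le_rfl, ht1.le⟩ ⟨hs't.le, hs'.2⟩,
        abs_of_neg (by linarith), abs_of_neg (by linarith), neg_sub, neg_sub]
    _ = (s' - s) * dist (γ₁ 0) (γ₂ 1) := by ring

end Concat

lemma IsGeodesicSpace.exists_isGeodesic_apply_eq {X : Type*} [MetricSpace X]
    (hgeo : IsGeodesicSpace X) {p q r : X}
    {t : ℝ} (ht0 : 0 < t) (ht1 : t < 1) (hpq : dist p q = t * dist p r)
    (hqr : dist q r = (1 - t) * dist p r) :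
    ∃ γ : ℝ → X, IsGeodesic γ ∧ γ 0 = p ∧ γ t = q ∧ γ 1 = r := by
  obtain ⟨γ₁, hγ₁, hγ₁0, hγ₁1⟩ := hgeo p q
  obtain ⟨γ₂, hγ₂, hγ₂0, hγ₂1⟩ := hgeo q r
  have hmid : γ₁ 1 = γ₂ 0 := hγ₁1.trans hγ₂0.symm
  refine ⟨pathConcat γ₁ γ₂ t, ?_, ?_, ?_, ?_⟩
  · apply isGeodesic_pathConcat hγ₁ hγ₂ hmid ht0 ht1
    · rwa [hγ₁0, hγ₁1, hγ₂1]
    · rwa [hγ₁0, hγ₂0, hγ₂1]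
  · rw [pathConcat_zero ht0.le, hγ₁0]
  · rw [pathConcat_self ht0.ne', hγ₁1]
  · rw [pathConcat_one hmid ht0.ne' ht1, hγ₂1]

/-- Let `(X,d)` be a geodesic space and `φ` a Kantorovich potential. If
`d(x,y)²/(2t) - φ(y) = φ^c(z) - d(x,z)²/(2(1-t))` for some `t ∈ (0,1)`, then `x` is a
`t`-intermediate point between `y` and `z`, and there is a `φ`-Kantorovich geodesic `γ`
with `γ_0 = y`, `γ_t = x`, `γ_1 = z`. -/
theorem statement1 {X : Type*} [MetricSpace X] (hgeo : IsGeodesicSpace X)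
    (φ φc : X → ℝ) (hpair : IsKantorovichPair φ φc)
    (x y z : X) (t : ℝ) (ht : t ∈ Set.Ioo (0:ℝ) 1)
    (h : dist x y ^ 2 / (2 * t) - φ y = φc z - dist x z ^ 2 / (2 * (1 - t))) :
    dist y z = dist x y / t ∧ dist y z = dist x z / (1 - t) ∧
      ∃ γ : ℝ → X, IsKantorovichGeodesic φ φc γ ∧ γ 0 = y ∧ γ t = x ∧ γ 1 = z := by
  obtain ⟨ht0, ht1⟩ := ht
  have hpot : φ y + φc z ≤ dist y z ^ 2 / 2 := by linarith [hpair.2.le_sub y z]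
  have hsum : dist x y ^ 2 / t + dist x z ^ 2 / (1 - t) = 2 * (φ y + φc z) := by
    field_simp at h ⊢
    linear_combination h
  obtain ⟨hxy, hxz⟩ := dist_eq_mul_of_sq_div_add_sq_div_le ht0 ht1 (hsum.trans_le (by linarith))
  refine ⟨by rw [hxy]; field_simp, by rw [hxz]; field_simp, ?_⟩
  obtain ⟨γ, hγ, hγ0, hγt, hγ1⟩ :=
    hgeo.exists_isGeodesic_apply_eq ht0 ht1 (by rw [dist_comm, hxy]) hxz
  refine ⟨γ, ⟨hγ, ?_⟩, hγ0, hγt, hγ1⟩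
  rw [hγ0, hγ1]
  rw [hxy, hxz] at hsum
  field_simp at hsum
  linear_combination -hsum / 2
end

section
/- Let (X,d) be a proper geodesic metric space, φ : X → ℝ a Kantorovich potential, t ∈ (0,1), γ a φ-Kantorovich geodesic, and x = γ_t. Then every φ-Kantorovich geodesic γ′ with γ′_t = x satisfies ℓ(γ′) = ℓ(γ). Moreover, the maps (0,1) ∋ τ ↦ φ_τ(x) and (0,1) ∋ τ ↦ φ̄_τ(x) are both differentiable at τ = t, with derivative equal to ℓ(γ)²/2. -/
/-!
Any pair `y₀, y₁` gives the two-sided bound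
`φ(y₀) - d(x,y₀)²/(2τ) ≤ φ_τ(x), φ̄_τ(x) ≤ d(x,y₁)²/(2(1-τ)) - φ^c(y₁)` for `τ ∈ (0,1)`,
because `φ(y₀) + φ^c(y₁) ≤ d(y₀,y₁)²/2` and `(a + c)²/2 ≤ a²/(2τ) + c²/(2(1-τ))`.
For `y₀ = γ₀`, `y₁ = γ₁` and `x = γ_t` the two bounds touch at `τ = t`, where both have
derivative `ℓ(γ)²/2`; so both potentials are squeezed and differentiable there. The derivative
depends only on `x` and `t`, hence so does `ℓ(γ)`.
-/

open Filter Topology Asymptotics Set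

theorem HasDerivAt.of_le_of_le {f L U : ℝ → ℝ} {t d : ℝ} (hL : HasDerivAt L d t)
    (hU : HasDerivAt U d t) (hLf : ∀ᶠ τ in 𝓝 t, L τ ≤ f τ) (hfU : ∀ᶠ τ in 𝓝 t, f τ ≤ U τ)
    (hLU : L t = U t) : HasDerivAt f d t := by
  have hft : f t = L t := le_antisymm (hLU ▸ hfU.self_of_nhds) hLf.self_of_nhds
  have hgap : (fun τ => U τ - L τ) =o[𝓝 t] fun τ => τ - t := by
    simpa [hLU] using (hU.sub hL).isLittleO
  have hbound : (fun τ => f τ - L τ) =O[𝓝 t] fun τ => U τ - L τ := by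
    refine IsBigO.of_bound 1 ?_
    filter_upwards [hLf, hfU] with τ h₁ h₂
    rw [Real.norm_of_nonneg (by linarith), Real.norm_of_nonneg (by linarith)]
    linarith
  have hfL : HasDerivAt (fun τ => f τ - L τ) 0 t :=
    .of_isLittleO (by simpa [hft] using hbound.trans_isLittleO hgap)
  simpa only [Pi.add_def, sub_add_cancel, zero_add] using hfL.add hL

lemma hasDerivAt_mul_sq_div_two_mul {t : ℝ} (ht : t ≠ 0) (a : ℝ) :
    HasDerivAt (fun τ => (t * a) ^ 2 / (2 * τ)) (-(a ^ 2 / 2)) t := by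
  have h := (hasDerivAt_inv ht).const_mul ((t * a) ^ 2 / 2)
  simp only [← div_eq_mul_inv, div_div] at h
  exact h.congr_deriv (by field_simp)

lemma add_sq_div_two_le {s : ℝ} (hs₀ : 0 < s) (hs₁ : s < 1) (a c : ℝ) :
    (a + c) ^ 2 / 2 ≤ a ^ 2 / (2 * s) + c ^ 2 / (2 * (1 - s)) := by
  have hs₁' : 0 < 1 - s := by linarith
  have hgap : a ^ 2 / (2 * s) + c ^ 2 / (2 * (1 - s)) - (a + c) ^ 2 / 2
      = ((1 - s) * a - s * c) ^ 2 / (2 * s * (1 - s)) := by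
    field_simp
    ring
  have : 0 ≤ ((1 - s) * a - s * c) ^ 2 / (2 * s * (1 - s)) := by positivity
  linarith

section Potentials

variable {X : Type*} [MetricSpace X]

lemma IsCTransform.add_le {φ ψ : X → ℝ} (h : IsCTransform φ ψ) (x y : X) :
    φ y + ψ x ≤ dist x y ^ 2 / 2 := by
  have : ψ x ≤ dist x y ^ 2 / 2 - φ y := (h x).1 ⟨y, rfl⟩
  linarith

noncomputable def hopfLax (f : X → ℝ) (s : ℝ) (x : X) : ℝ :=
  sInf {v : ℝ | ∃ y : X, v = dist x y ^ 2 / (2 * s) - f y}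

lemma interpPotential_eq_neg_hopfLax (φ : X → ℝ) {τ : ℝ} (hτ : τ ≠ 0) (x : X) :
    interpPotential φ τ x = -hopfLax φ τ x :=
  if_neg hτ

lemma reversePotential_eq_hopfLax (φc : X → ℝ) {τ : ℝ} (hτ : τ ≠ 1) (x : X) :
    reversePotential φc τ x = hopfLax φc (1 - τ) x :=
  if_neg hτ

variable {f g : X → ℝ} {s : ℝ}

lemma sub_sq_div_le_sq_div_sub (hfg : ∀ y z, f y + g z ≤ dist y z ^ 2 / 2)
    (hs₀ : 0 < s) (hs₁ : s < 1) (x y z : X) :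
    g z - dist x z ^ 2 / (2 * (1 - s)) ≤ dist x y ^ 2 / (2 * s) - f y := by
  have htri : dist y z ≤ dist x y + dist x z := dist_comm x y ▸ dist_triangle y x z
  have hsq : dist y z ^ 2 ≤ (dist x y + dist x z) ^ 2 := by gcongr
  linarith [hfg y z, add_sq_div_two_le hs₀ hs₁ (dist x y) (dist x z)]

lemma le_hopfLax (hfg : ∀ y z, f y + g z ≤ dist y z ^ 2 / 2) (hs₀ : 0 < s) (hs₁ : s < 1)
    (x z : X) : g z - dist x z ^ 2 / (2 * (1 - s)) ≤ hopfLax f s x :=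
  le_csInf ⟨_, x, rfl⟩ <| by
    rintro _ ⟨y, rfl⟩
    exact sub_sq_div_le_sq_div_sub hfg hs₀ hs₁ x y z

lemma hopfLax_le (hfg : ∀ y z, f y + g z ≤ dist y z ^ 2 / 2) (hs₀ : 0 < s) (hs₁ : s < 1)
    (x y : X) : hopfLax f s x ≤ dist x y ^ 2 / (2 * s) - f y :=
  csInf_le ⟨_, by rintro _ ⟨y', rfl⟩; exact sub_sq_div_le_sq_div_sub hfg hs₀ hs₁ x y' x⟩
    ⟨y, rfl⟩

variable {φ φc : X → ℝ} {τ : ℝ}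

lemma IsCTransform.interpPotential_mem_Icc (h : IsCTransform φ φc) (hτ : τ ∈ Ioo 0 1)
    (x y z : X) :
    interpPotential φ τ x ∈
      Icc (φ y - dist x y ^ 2 / (2 * τ)) (dist x z ^ 2 / (2 * (1 - τ)) - φc z) := by
  have hfg : ∀ y z, φ y + φc z ≤ dist y z ^ 2 / 2 := fun y z => dist_comm z y ▸ h.add_le z y
  rw [interpPotential_eq_neg_hopfLax φ hτ.1.ne' x]
  constructor
  · linarith [hopfLax_le hfg hτ.1 hτ.2 x y]
  · linarith [le_hopfLax hfg hτ.1 hτ.2 x z]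

lemma IsCTransform.reversePotential_mem_Icc (h : IsCTransform φ φc) (hτ : τ ∈ Ioo 0 1)
    (x y z : X) :
    reversePotential φc τ x ∈
      Icc (φ y - dist x y ^ 2 / (2 * τ)) (dist x z ^ 2 / (2 * (1 - τ)) - φc z) := by
  have hfg : ∀ y z, φc y + φ z ≤ dist y z ^ 2 / 2 := fun y z => add_comm (φ z) _ ▸ h.add_le y z
  have hs₀ : 0 < 1 - τ := sub_pos.2 hτ.2
  have hs₁ : 1 - τ < 1 := sub_lt_self 1 hτ.1
  rw [reversePotential_eq_hopfLax φc hτ.2.ne x]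
  refine ⟨?_, hopfLax_le hfg hs₀ hs₁ x z⟩
  simpa only [sub_sub_cancel] using le_hopfLax hfg hs₀ hs₁ x y

end Potentials

section Geodesics

variable {X : Type*} [MetricSpace X] {γ : ℝ → X} {t : ℝ}

lemma IsGeodesic.dist_zero (hγ : IsGeodesic γ) (ht : t ∈ Icc 0 1) :
    dist (γ t) (γ 0) = t * dist (γ 0) (γ 1) := by
  rw [hγ t ht 0 ⟨le_rfl, zero_le_one⟩, sub_zero, abs_of_nonneg ht.1]

lemma IsGeodesic.dist_one (hγ : IsGeodesic γ) (ht : t ∈ Icc 0 1) :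
    dist (γ t) (γ 1) = (1 - t) * dist (γ 0) (γ 1) := by
  rw [hγ t ht 1 ⟨zero_le_one, le_rfl⟩, abs_of_nonpos (sub_nonpos.2 ht.2), neg_sub]

lemma IsKantorovichGeodesic.hasDerivAt_of_mem_Icc {φ φc : X → ℝ}
    (hγ : IsKantorovichGeodesic φ φc γ) (ht : t ∈ Ioo 0 1) {F : ℝ → ℝ}
    (hF : ∀ τ ∈ Ioo (0 : ℝ) 1, F τ ∈ Icc (φ (γ 0) - dist (γ t) (γ 0) ^ 2 / (2 * τ))
      (dist (γ t) (γ 1) ^ 2 / (2 * (1 - τ)) - φc (γ 1))) :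
    HasDerivAt F (dist (γ 0) (γ 1) ^ 2 / 2) t := by
  set ℓ := dist (γ 0) (γ 1)
  have ht' : 1 - t ≠ 0 := (sub_pos.2 ht.2).ne'
  rw [hγ.1.dist_zero (Ioo_subset_Icc_self ht), hγ.1.dist_one (Ioo_subset_Icc_self ht)] at hF
  have hL : HasDerivAt (fun τ => φ (γ 0) - (t * ℓ) ^ 2 / (2 * τ)) (ℓ ^ 2 / 2) t := by
    simpa using (hasDerivAt_mul_sq_div_two_mul ht.1.ne' ℓ).const_sub (φ (γ 0))
  have hU : HasDerivAt (fun τ => ((1 - t) * ℓ) ^ 2 / (2 * (1 - τ)) - φc (γ 1)) (ℓ ^ 2 / 2) t := by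
    have := HasDerivAt.comp_const_sub 1 t (by simpa using hasDerivAt_mul_sq_div_two_mul ht' ℓ)
    simpa using this.sub_const (φc (γ 1))
  have hLU : φ (γ 0) - (t * ℓ) ^ 2 / (2 * t) = ((1 - t) * ℓ) ^ 2 / (2 * (1 - t)) - φc (γ 1) := by
    rw [show φc (γ 1) = ℓ ^ 2 / 2 - φ (γ 0) by linarith [hγ.2]]
    field_simp
    ring
  have hev := Ioo_mem_nhds ht.1 ht.2
  exact HasDerivAt.of_le_of_le hL hU (eventually_of_mem hev fun τ hτ => (hF τ hτ).1)
    (eventually_of_mem hev fun τ hτ => (hF τ hτ).2) hLU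

end Geodesics

theorem statement3_general {X : Type*} [MetricSpace X]
    (φ φc : X → ℝ) (hpair : IsKantorovichPair φ φc)
    (t : ℝ) (ht : t ∈ Set.Ioo (0:ℝ) 1)
    (γ : ℝ → X) (hγ : IsKantorovichGeodesic φ φc γ) (x : X) (hx : γ t = x) :
    (∀ γ' : ℝ → X, IsKantorovichGeodesic φ φc γ' → γ' t = x →
        dist (γ' 0) (γ' 1) = dist (γ 0) (γ 1)) ∧
      HasDerivAt (fun τ => interpPotential φ τ x) (dist (γ 0) (γ 1) ^ 2 / 2) t ∧
      HasDerivAt (fun τ => reversePotential φc τ x) (dist (γ 0) (γ 1) ^ 2 / 2) t := by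
  have hinterp : ∀ γ' : ℝ → X, IsKantorovichGeodesic φ φc γ' → γ' t = x →
      HasDerivAt (fun τ => interpPotential φ τ x) (dist (γ' 0) (γ' 1) ^ 2 / 2) t :=
    fun γ' hγ' hx' => hγ'.hasDerivAt_of_mem_Icc ht fun τ hτ =>
      hx' ▸ hpair.1.interpPotential_mem_Icc hτ _ _ _
  refine ⟨fun γ' hγ' hx' => ?_, hinterp γ hγ hx,
    hγ.hasDerivAt_of_mem_Icc ht fun τ hτ => hx ▸ hpair.1.reversePotential_mem_Icc hτ _ _ _⟩
  have hsq := (hinterp γ' hγ' hx').unique (hinterp γ hγ hx)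
  exact (sq_eq_sq₀ dist_nonneg dist_nonneg).1 (by linarith)

/-- On a proper geodesic space, if `x = γ_t` for a `φ`-Kantorovich geodesic `γ` and
`t ∈ (0,1)`, then every `φ`-Kantorovich geodesic through `x` at time `t` has the same
length as `γ`, and both `τ ↦ φ_τ(x)` and `τ ↦ φ̄_τ(x)` are differentiable at `τ = t`
with derivative `ℓ(γ)²/2`. -/
theorem statement3 {X : Type*} [MetricSpace X] [ProperSpace X]
    (hgeo : IsGeodesicSpace X) (φ φc : X → ℝ) (hpair : IsKantorovichPair φ φc)
    (t : ℝ) (ht : t ∈ Set.Ioo (0:ℝ) 1)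
    (γ : ℝ → X) (hγ : IsKantorovichGeodesic φ φc γ) (x : X) (hx : γ t = x) :
    (∀ γ' : ℝ → X, IsKantorovichGeodesic φ φc γ' → γ' t = x →
        dist (γ' 0) (γ' 1) = dist (γ 0) (γ 1)) ∧
      HasDerivAt (fun τ => interpPotential φ τ x) (dist (γ 0) (γ 1) ^ 2 / 2) t ∧
      HasDerivAt (fun τ => reversePotential φc τ x) (dist (γ 0) (γ 1) ^ 2 / 2) t :=
  statement3_general φ φc hpair t ht γ hγ x hx
end
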